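/- Let p be a prime integer, M̄ a finitely generated module over R̄ = (ℤ/pℤ)[x₁,…,xₙ], and β : M̄ → F^*(M̄) an R̄-linear map. If r ≥ 1 satisfies ker β_r = ker β_{r+1}, then the direct limit 𝓜 of the system M̄ → F^*(M̄) → F^{*2}(M̄) → ⋯ is zero if and only if β_r = 0 (equivalently, ker β_r = M̄). -/

import Mathlib

/-!
Over `𝔽_p[x₁,…,xₙ]` the Frobenius is flat (the ring is free over its `p`-th powers, with basis the
monomials of exponents `< p`), so `F^*` is exact. Since `β_{s+1} = F^*(β_s) ∘ β`, exactness shows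
that `ker β_s = ker β_{s+1}` forces `ker β_{s+1} = ker β_{s+2}`: the kernels are constant from `r`
on. If `𝓜 = 0`, every element of `M̄` dies under some `β_k`; as `M̄` is finitely generated one
`β_k` kills everything, and by the stabilization so does `β_r`. Conversely, if `β_r = 0` then every
transition map `F^{*j}(M̄) → F^{*(j+r)}(M̄)`, which is `F^{*j}(β_r)`, vanishes.
-/

/- `R̄ = (ℤ/pℤ)[x₁,…,xₙ]`. -/
open CategoryTheory CategoryTheory.Limits

noncomputable section

abbrev Rbar (p n : ℕ) : Type := MvPolynomial (Fin n) (ZMod p)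

/-- The pull-back functor `F^*` : base change along the Frobenius `r ↦ r^p`. -/
noncomputable def Fstar (A : Type) [CommRing A] (p : ℕ) [Fact p.Prime] [CharP A p] :
    ModuleCat A ⥤ ModuleCat A :=
  ModuleCat.extendScalars (frobenius A p)

/-- The `j`-fold pull-back functor `F^{*j}`; note `F^{*(j+1)}(N) = F^{*j}(F^*(N))`. -/
noncomputable def FstarIter (A : Type) [CommRing A] (p : ℕ) [Fact p.Prime] [CharP A p] :
    ℕ → ModuleCat A ⥤ ModuleCat A
  | 0 => 𝟭 _
  | j + 1 => Fstar A p ⋙ FstarIter A p j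

/-- `β_j : M̄ → F^{*j}(M̄)`, defined by `β₀ = id`, `β_{j+1} = F^{*j}(β) ∘ β_j`
(so `β₁ = β`). -/
noncomputable def betaIter {A : Type} [CommRing A] {p : ℕ} [Fact p.Prime] [CharP A p]
    {M : ModuleCat A} (β : M ⟶ (Fstar A p).obj M) :
    (j : ℕ) → (M ⟶ (FstarIter A p j).obj M)
  | 0 => 𝟙 M
  | j + 1 => betaIter β j ≫ (FstarIter A p j).map β

/-- The inductive system `M̄ →^β F^*(M̄) →^{F^*(β)} F^{*2}(M̄) → ⋯` as a functor `ℕ ⥤ ModuleCat A`. -/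
noncomputable def genSystem {A : Type} [CommRing A] {p : ℕ} [Fact p.Prime] [CharP A p]
    {M : ModuleCat A} (β : M ⟶ (Fstar A p).obj M) : ℕ ⥤ ModuleCat A :=
  Functor.ofSequence (X := fun j => (FstarIter A p j).obj M)
    (fun j => (FstarIter A p j).map β)

/-- `𝓜`, the direct limit (colimit over `ℕ`) of the system generated by `β`;
the underlying module of the `F`-finite module generated by `β`. -/
noncomputable def genLimit {A : Type} [CommRing A] {p : ℕ} [Fact p.Prime] [CharP A p]
    {M : ModuleCat A} (β : M ⟶ (Fstar A p).obj M) : ModuleCat A :=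
  colimit (genSystem β)

namespace MvPolynomial

variable {σ : Type*} [Finite σ] (p : ℕ) [NeZero p]

def finToExponent (a : σ → Fin p) : σ →₀ ℕ :=
  Finsupp.equivFunOnFinite.symm fun i => a i

def exponentDivModEquiv : (σ →₀ ℕ) ≃ (σ → Fin p) × (σ →₀ ℕ) where
  toFun d := (fun i => ⟨d i % p, Nat.mod_lt _ (NeZero.pos p)⟩, d.mapRange (· / p) (Nat.zero_div p))
  invFun aq := p • aq.2 + finToExponent p aq.1
  left_inv d := by
    ext i
    simp [finToExponent, Nat.div_add_mod]
  right_inv := by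
    rintro ⟨a, q⟩
    ext i
    · simp [finToExponent, Nat.mod_eq_of_lt (a i).2]
    · simp [finToExponent, Nat.mul_add_div (NeZero.pos p), Nat.div_eq_of_lt (a i).2]

variable (K : Type*) [CommSemiring K]

/-- `f ↦ (fₐ)ₐ` where `f = ∑ₐ expand p (fₐ) * X^a`, over exponents `a` with all entries `< p`. -/
def expandDecomp : MvPolynomial σ K ≃ₗ[K] ((σ → Fin p) →₀ MvPolynomial σ K) :=
  (basisMonomials σ K).repr ≪≫ₗ Finsupp.domLCongr (exponentDivModEquiv p) ≪≫ₗ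
    Finsupp.curryLinearEquiv K ≪≫ₗ Finsupp.mapRange.linearEquiv (basisMonomials σ K).repr.symm

variable {K}

theorem expandDecomp_monomial (a : σ → Fin p) (q : σ →₀ ℕ) (c : K) :
    expandDecomp p K (monomial (p • q + finToExponent p a) c) = Finsupp.single a (monomial q c) := by
  have : exponentDivModEquiv p (p • q + finToExponent p a) = (a, q) :=
    (exponentDivModEquiv p).apply_symm_apply (a, q)
  have hrepr : ∀ d (c : K), (basisMonomials σ K).repr (monomial d c) = Finsupp.single d c :=
    fun _ _ => rfl
  simp only [expandDecomp, LinearEquiv.trans_apply, hrepr, Finsupp.domLCongr_single, this,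
    Finsupp.curryLinearEquiv_apply, Finsupp.curry_single, Finsupp.mapRange.linearEquiv_apply,
    Finsupp.mapRange_single]
  rfl

theorem expandDecomp_expand_mul (r s : MvPolynomial σ K) :
    expandDecomp p K (expand p r * s) = r • expandDecomp p K s := by
  induction s using MvPolynomial.induction_on' with
  | monomial m c' =>
    obtain ⟨⟨a, q⟩, rfl⟩ := (exponentDivModEquiv p).symm.surjective m
    induction r using MvPolynomial.induction_on' with
    | monomial d c =>
      change expandDecomp p K (expand p (monomial d c) * monomial (p • q + finToExponent p a) c') =
        monomial d c • expandDecomp p K (monomial (p • q + finToExponent p a) c')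
      rw [expand_monomial, monomial_mul, ← add_assoc, ← smul_add, expandDecomp_monomial,
        expandDecomp_monomial, Finsupp.smul_single, smul_eq_mul, monomial_mul]
    | add r₁ r₂ h₁ h₂ => rw [map_add, add_mul, map_add, h₁, h₂, add_smul]
  | add s₁ s₂ h₁ h₂ => rw [mul_add, map_add, h₁, h₂, map_add, smul_add]

theorem flat_expand {K : Type*} [CommRing K] :
    (expand p : MvPolynomial σ K →ₐ[K] MvPolynomial σ K).toRingHom.Flat := by
  -- On `MvPolynomial σ K` itself an `expand`-module structure would clash with the usual one.
  let S := (ModuleCat.restrictScalars (expand p : MvPolynomial σ K →ₐ[K] _).toRingHom).obj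
    (ModuleCat.of _ (MvPolynomial σ K))
  let e : S ≃ₗ[MvPolynomial σ K] ((σ → Fin p) →₀ MvPolynomial σ K) :=
    { expandDecomp p K with map_smul' := expandDecomp_expand_mul p }
  have : Module.Flat (MvPolynomial σ K) S := Module.Flat.of_linearEquiv e
  exact this

theorem flat_frobenius_zmod (q : ℕ) [Fact q.Prime] :
    (frobenius (MvPolynomial σ (ZMod q)) q).Flat := by
  rw [show frobenius _ q = (expand q).toRingHom from RingHom.ext frobenius_zmod]
  exact flat_expand q

end MvPolynomial

universe u

theorem ModuleCat.isZero_colimit_iff {R J : Type u} [Ring R] [SmallCategory J]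
    [IsFiltered J] (F : J ⥤ ModuleCat.{u} R) :
    IsZero (colimit F) ↔ ∀ (j : J) (x : F.obj j), ∃ (j' : J) (i : j ⟶ j'), F.map i x = 0 := by
  refine ⟨fun h j x => Concrete.colimit_rep_eq_zero R F j x ?_, fun h => ?_⟩
  · rw [h.eq_of_tgt (colimit.ι F j) 0]
    rfl
  · have : Subsingleton (colimit F : ModuleCat R) := by
      refine subsingleton_of_forall_eq 0 fun x => ?_
      obtain ⟨j, y, rfl⟩ := Concrete.colimit_exists_rep F x
      obtain ⟨j', i, hi⟩ := h j y
      rw [← colimit.w_apply F i y, hi, map_zero]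
    exact isZero_of_subsingleton _

theorem ModuleCat.ker_extendScalars_map {A B : Type*} [CommRing A] [CommRing B]
    {f : A →+* B} (hf : f.Flat) {M N : ModuleCat A} (g : M ⟶ N) :
    LinearMap.ker ((extendScalars f).map g).hom =
      LinearMap.range ((extendScalars f).map (ofHom (LinearMap.ker g.hom).subtype)).hom := by
  algebraize [f]
  have hexact := Module.Flat.lTensor_exact B (LinearMap.exact_subtype_ker_map g.hom)
  ext x
  exact hexact x

theorem ModuleCat.ker_extendScalars_map_eq_of_ker_eq {A B : Type*} [CommRing A] [CommRing B]
    {f : A →+* B} (hf : f.Flat) {M N N' : ModuleCat A} {g : M ⟶ N} {g' : M ⟶ N'}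
    (h : LinearMap.ker g.hom = LinearMap.ker g'.hom) :
    LinearMap.ker ((extendScalars f).map g).hom = LinearMap.ker ((extendScalars f).map g').hom := by
  rw [ker_extendScalars_map hf, ker_extendScalars_map hf, h]

section Iterates

variable {A : Type} [CommRing A] {p : ℕ} [Fact p.Prime] [CharP A p]

theorem FstarIter_map_zero (j : ℕ) {M N : ModuleCat A} :
    (FstarIter A p j).map (0 : M ⟶ N) = 0 := by
  induction j generalizing M N with
  | zero => rfl
  | succ j ih =>
    exact (congrArg (FstarIter A p j).map
      ((ModuleCat.extendScalars (frobenius A p)).map_zero M N)).trans ih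

theorem FstarIter_add (j k : ℕ) :
    FstarIter A p (j + k) = FstarIter A p k ⋙ FstarIter A p j := by
  induction k with
  | zero => rfl
  | succ k ih => exact congrArg (Fstar A p ⋙ ·) ih

theorem FstarIter_comp_Fstar (s : ℕ) :
    FstarIter A p s ⋙ Fstar A p = Fstar A p ⋙ FstarIter A p s := by
  induction s with
  | zero => rfl
  | succ s ih => exact congrArg (Fstar A p ⋙ ·) ih

variable {M : ModuleCat A} (β : M ⟶ (Fstar A p).obj M)

theorem betaIter_succ' (s : ℕ) :
    betaIter β (s + 1) = β ≫ (Fstar A p).map (betaIter β s) ≫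
      eqToHom (show (Fstar A p).obj ((FstarIter A p s).obj M) = (FstarIter A p (s + 1)).obj M from
        Functor.congr_obj (FstarIter_comp_Fstar s) M) := by
  induction s with
  | zero =>
    show betaIter β 0 ≫ (FstarIter A p 0).map β =
      β ≫ (Fstar A p).map (𝟙 M) ≫ eqToHom (Functor.congr_obj (FstarIter_comp_Fstar 0) M)
    rw [CategoryTheory.Functor.map_id]
    rfl
  | succ s ih =>
    have hnat : (Fstar A p).map ((FstarIter A p s).map β) = _ :=
      Functor.congr_hom (FstarIter_comp_Fstar (A := A) (p := p) s) β
    show betaIter β (s + 1) ≫ (FstarIter A p s).map ((Fstar A p).map β) =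
      β ≫ (Fstar A p).map (betaIter β s ≫ (FstarIter A p s).map β) ≫
        eqToHom (Functor.congr_obj (FstarIter_comp_Fstar (s + 1)) M)
    rw [ih, Functor.map_comp, hnat]
    simp only [Category.assoc]
    erw [eqToHom_trans, eqToHom_refl, Category.comp_id]
    rfl

theorem ker_betaIter_succ (s : ℕ) :
    LinearMap.ker (betaIter β (s + 1)).hom =
      (LinearMap.ker ((Fstar A p).map (betaIter β s)).hom).comap β.hom := by
  have hker_eqToHom : ∀ {X Y : ModuleCat A} (h : X = Y), LinearMap.ker (eqToHom h).hom = ⊥ := by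
    rintro X _ rfl
    exact LinearMap.ker_id
  rw [betaIter_succ', ModuleCat.hom_comp, ModuleCat.hom_comp, LinearMap.ker_comp,
    LinearMap.ker_comp, hker_eqToHom, Submodule.comap_bot]

theorem monotone_ker_betaIter : Monotone fun s => LinearMap.ker (betaIter β s).hom :=
  monotone_nat_of_le_succ fun _ => LinearMap.ker_le_ker_comp _ _

theorem ker_betaIter_succ_succ_of_eq (hF : (frobenius A p).Flat) {s : ℕ}
    (h : LinearMap.ker (betaIter β s).hom = LinearMap.ker (betaIter β (s + 1)).hom) :
    LinearMap.ker (betaIter β (s + 1)).hom = LinearMap.ker (betaIter β (s + 2)).hom := by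
  rw [ker_betaIter_succ, ker_betaIter_succ]
  exact congrArg _ (ModuleCat.ker_extendScalars_map_eq_of_ker_eq hF h)

theorem ker_betaIter_succ_eq_of_le (hF : (frobenius A p).Flat) {r : ℕ}
    (h : LinearMap.ker (betaIter β r).hom = LinearMap.ker (betaIter β (r + 1)).hom)
    {m : ℕ} (hm : r ≤ m) :
    LinearMap.ker (betaIter β m).hom = LinearMap.ker (betaIter β (m + 1)).hom := by
  induction m, hm using Nat.le_induction with
  | base => exact h
  | succ m _ ih => exact ker_betaIter_succ_succ_of_eq β hF ih

theorem ker_betaIter_eq_of_le (hF : (frobenius A p).Flat) {r : ℕ}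
    (h : LinearMap.ker (betaIter β r).hom = LinearMap.ker (betaIter β (r + 1)).hom)
    {m : ℕ} (hm : r ≤ m) :
    LinearMap.ker (betaIter β m).hom = LinearMap.ker (betaIter β r).hom := by
  induction m, hm using Nat.le_induction with
  | base => rfl
  | succ m hrm ih => exact (ker_betaIter_succ_eq_of_le β hF h hrm).symm.trans ih

theorem exists_ker_betaIter_eq_top [Module.Finite A M] (h : ∀ x : M, ∃ k, betaIter β k x = 0) :
    ∃ k, LinearMap.ker (betaIter β k).hom = ⊤ := by
  obtain ⟨k, hk⟩ := Submodule.FG.stabilizes_of_iSup_eq Module.Finite.fg_top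
    ⟨fun k => LinearMap.ker (betaIter β k).hom, monotone_ker_betaIter β⟩
    (eq_top_iff.mpr fun x _ => (Submodule.mem_iSup_of_chain _ x).mpr (h x))
  exact ⟨k, hk.symm⟩

theorem genSystem_map_succ (k : ℕ) :
    (genSystem β).map (homOfLE (Nat.le_succ k)) = (FstarIter A p k).map β :=
  Functor.ofSequence_map_homOfLE_succ _ k

theorem genSystem_map_zero_le (k : ℕ) :
    (genSystem β).map (homOfLE (Nat.zero_le k)) = betaIter β k := by
  induction k with
  | zero => exact (genSystem β).map_id 0
  | succ k ih =>
    rw [show homOfLE (Nat.zero_le (k + 1)) = homOfLE (Nat.zero_le k) ≫ homOfLE (Nat.le_succ k) from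
      rfl, Functor.map_comp, ih, genSystem_map_succ]
    rfl

theorem genSystem_map_le_add (j m : ℕ) :
    (genSystem β).map (homOfLE (Nat.le_add_right j m)) =
      (FstarIter A p j).map (betaIter β m) ≫
        eqToHom (Functor.congr_obj (FstarIter_add (A := A) (p := p) j m) M).symm := by
  induction m with
  | zero =>
    rw [show homOfLE (Nat.le_add_right j 0) = 𝟙 j from rfl, CategoryTheory.Functor.map_id,
      show (FstarIter A p j).map (betaIter β 0) = 𝟙 _ from (FstarIter A p j).map_id M]
    exact (Category.id_comp _).symm
  | succ m ih =>
    have hnat : (FstarIter A p (j + m)).map β = _ :=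
      Functor.congr_hom (FstarIter_add (A := A) (p := p) j m) β
    rw [show homOfLE (Nat.le_add_right j (m + 1)) =
        homOfLE (Nat.le_add_right j m) ≫ homOfLE (Nat.le_succ (j + m)) from rfl,
      Functor.map_comp, ih, genSystem_map_succ,
      show betaIter β (m + 1) = betaIter β m ≫ (FstarIter A p m).map β from rfl, hnat]
    erw [Functor.map_comp]
    simp only [Category.assoc]
    erw [Category.assoc, eqToHom_trans_assoc, eqToHom_refl, Category.id_comp]
    rfl

end Iterates

theorem stmt_2_general (p n : ℕ) [Fact p.Prime] (M : ModuleCat (Rbar p n))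
    [Module.Finite (Rbar p n) M] (β : M ⟶ (Fstar (Rbar p n) p).obj M)
    (r : ℕ)
    (hker : LinearMap.ker (betaIter β r).hom = LinearMap.ker (betaIter β (r + 1)).hom) :
    IsZero (genLimit β) ↔ betaIter β r = 0 := by
  have hF : (frobenius (Rbar p n) p).Flat := MvPolynomial.flat_frobenius_zmod p
  rw [genLimit, ModuleCat.isZero_colimit_iff]
  constructor
  · intro h
    obtain ⟨k, hk⟩ := exists_ker_betaIter_eq_top β fun x => by
      obtain ⟨k, i, hi⟩ := h 0 x
      exact ⟨k, genSystem_map_zero_le β k ▸ hi⟩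
    have hr : LinearMap.ker (betaIter β r).hom = ⊤ := by
      rw [← ker_betaIter_eq_of_le β hF hker (Nat.le_add_right r k), eq_top_iff, ← hk]
      exact monotone_ker_betaIter β (Nat.le_add_left k r)
    exact ModuleCat.hom_ext (LinearMap.ker_eq_top.mp hr)
  · intro hr j x
    refine ⟨j + r, homOfLE (Nat.le_add_right j r), ?_⟩
    rw [genSystem_map_le_add, hr, FstarIter_map_zero, zero_comp]
    rfl

/-- If `r ≥ 1` satisfies `ker β_r = ker β_{r+1}`, then the direct limit `𝓜`
of the system `M̄ → F^*(M̄) → F^{*2}(M̄) → ⋯` is zero if and only if `β_r = 0`. -/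
theorem stmt_2 (p n : ℕ) [Fact p.Prime] (M : ModuleCat (Rbar p n))
    [Module.Finite (Rbar p n) M] (β : M ⟶ (Fstar (Rbar p n) p).obj M)
    (r : ℕ) (hr : 1 ≤ r)
    (hker : LinearMap.ker (betaIter β r).hom = LinearMap.ker (betaIter β (r + 1)).hom) :
    IsZero (genLimit β) ↔ betaIter β r = 0 :=
  stmt_2_general p n M β r hker
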